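/- For all smooth vector fields u and ξ on ℝ^n the following identity holds pointwise: u^i u^j £_ξ Γ^k_{ij} = (£_ξ F)^k − u^i ((£_ξ u)^k)_{|i} − u^k_{|i} (£_ξ u)^i, where F is the vector field F^k := u^i u^k_{|i}. -/

import Mathlib

open scoped BigOperators

noncomputable section

/-- Partial derivative `∂_j f` of a scalar function on `ℝ^n`. -/
def pd {n : ℕ} (j : Fin n) (f : (Fin n → ℝ) → ℝ) (x : Fin n → ℝ) : ℝ :=
  fderiv ℝ f x (Pi.single j 1)

/-- Covariant derivative of a vector field: `ξ^k_{|j} = ∂_j ξ^k + Γ^k_{mj} ξ^m`. -/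
def covV {n : ℕ} (Γ : Fin n → Fin n → Fin n → (Fin n → ℝ) → ℝ)
    (ξ : Fin n → (Fin n → ℝ) → ℝ) (k j : Fin n) (x : Fin n → ℝ) : ℝ :=
  pd j (ξ k) x + ∑ m, Γ k m j x * ξ m x

/-- Covariant derivative of a (1,1)-tensor field:
`A^k_{i|j} = ∂_j A^k_i + Γ^k_{mj} A^m_i − Γ^m_{ij} A^k_m`. -/
def covT {n : ℕ} (Γ : Fin n → Fin n → Fin n → (Fin n → ℝ) → ℝ)
    (A : Fin n → Fin n → (Fin n → ℝ) → ℝ) (k i j : Fin n) (x : Fin n → ℝ) : ℝ :=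
  pd j (A k i) x + ∑ m, Γ k m j x * A m i x - ∑ m, Γ m i j x * A k m x

/-- Curvature tensor
`R^k_{ijl} = ∂_j Γ^k_{il} − ∂_l Γ^k_{ij} + Γ^n_{il} Γ^k_{nj} − Γ^n_{ij} Γ^k_{nl}`. -/
def curv {n : ℕ} (Γ : Fin n → Fin n → Fin n → (Fin n → ℝ) → ℝ)
    (k i j l : Fin n) (x : Fin n → ℝ) : ℝ :=
  pd j (Γ k i l) x - pd l (Γ k i j) x
    + ∑ m, Γ m i l x * Γ k m j x - ∑ m, Γ m i j x * Γ k m l x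

/-- Torsion tensor `T^k_{ij} = Γ^k_{ji} − Γ^k_{ij}`. -/
def tor {n : ℕ} (Γ : Fin n → Fin n → Fin n → (Fin n → ℝ) → ℝ)
    (k i j : Fin n) (x : Fin n → ℝ) : ℝ :=
  Γ k j i x - Γ k i j x

/-- Lie derivative of a vector field: `(£_ξ u)^k = ξ^j ∂_j u^k − u^j ∂_j ξ^k`. -/
def lieV {n : ℕ} (ξ u : Fin n → (Fin n → ℝ) → ℝ) (k : Fin n) (x : Fin n → ℝ) : ℝ :=
  ∑ j, ξ j x * pd j (u k) x - ∑ j, u j x * pd j (ξ k) x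

/-- Lie derivative of a (1,1)-tensor field:
`(£_ξ A)^k_i = ξ^m ∂_m A^k_i − A^m_i ∂_m ξ^k + A^k_m ∂_i ξ^m`. -/
def lieT {n : ℕ} (ξ : Fin n → (Fin n → ℝ) → ℝ)
    (A : Fin n → Fin n → (Fin n → ℝ) → ℝ) (k i : Fin n) (x : Fin n → ℝ) : ℝ :=
  ∑ m, ξ m x * pd m (A k i) x - ∑ m, A m i x * pd m (ξ k) x
    + ∑ m, A k m x * pd i (ξ m) x

/-- Lie derivative of the connection coefficients:
`£_ξ Γ^k_{ij} = ∂_j ∂_i ξ^k + ξ^m ∂_m Γ^k_{ij} − Γ^m_{ij} ∂_m ξ^k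
  + Γ^k_{mj} ∂_i ξ^m + Γ^k_{im} ∂_j ξ^m`. -/
def lieC {n : ℕ} (ξ : Fin n → (Fin n → ℝ) → ℝ)
    (Γ : Fin n → Fin n → Fin n → (Fin n → ℝ) → ℝ)
    (k i j : Fin n) (x : Fin n → ℝ) : ℝ :=
  pd j (fun y => pd i (ξ k) y) x + ∑ m, ξ m x * pd m (Γ k i j) x
    - ∑ m, Γ m i j x * pd m (ξ k) x + ∑ m, Γ k m j x * pd i (ξ m) x
    + ∑ m, Γ k i m x * pd j (ξ m) x

variable {n : ℕ}

lemma contDiff_pd {f : (Fin n → ℝ) → ℝ} (hf : ContDiff ℝ (⊤ : ℕ∞) f) (j : Fin n) :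
    ContDiff ℝ (⊤ : ℕ∞) (pd j f) :=
  (hf.fderiv_right (m := (⊤ : ℕ∞)) (by simp)).clm_apply contDiff_const

lemma pd_add {f g : (Fin n → ℝ) → ℝ} {x : Fin n → ℝ} (hf : DifferentiableAt ℝ f x)
    (hg : DifferentiableAt ℝ g x) (j : Fin n) :
    pd j (fun y => f y + g y) x = pd j f x + pd j g x := by
  simp [pd, fderiv_fun_add hf hg]

lemma pd_sub {f g : (Fin n → ℝ) → ℝ} {x : Fin n → ℝ} (hf : DifferentiableAt ℝ f x)
    (hg : DifferentiableAt ℝ g x) (j : Fin n) :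
    pd j (fun y => f y - g y) x = pd j f x - pd j g x := by
  simp [pd, fderiv_fun_sub hf hg]

lemma pd_mul {f g : (Fin n → ℝ) → ℝ} {x : Fin n → ℝ} (hf : DifferentiableAt ℝ f x)
    (hg : DifferentiableAt ℝ g x) (j : Fin n) :
    pd j (fun y => f y * g y) x = pd j f x * g x + f x * pd j g x := by
  simp [pd, fderiv_fun_mul hf hg]; ring

lemma pd_sum {ι : Type*} [Fintype ι] {f : ι → (Fin n → ℝ) → ℝ} {x : Fin n → ℝ}
    (hf : ∀ m, DifferentiableAt ℝ (f m) x) (j : Fin n) :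
    pd j (fun y => ∑ m, f m y) x = ∑ m, pd j (f m) x := by
  simp [pd, fderiv_fun_sum (fun m _ => hf m)]

lemma pd_comm {f : (Fin n → ℝ) → ℝ} (hf : ContDiff ℝ (⊤ : ℕ∞) f) (i j : Fin n) (x : Fin n → ℝ) :
    pd i (pd j f) x = pd j (pd i f) x := by
  have hsym := (hf.contDiffAt (x := x)).isSymmSndFDerivAt (by norm_num; exact WithTop.coe_le_coe.mpr (le_top : (2 : ℕ∞) ≤ ⊤))
  have hd : DifferentiableAt ℝ (fderiv ℝ f) x :=
    ((hf.fderiv_right (m := (⊤ : ℕ∞)) (by simp)).differentiable (by simp)) x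
  have key : ∀ v w : Fin n → ℝ, fderiv ℝ (fun y => fderiv ℝ f y v) x w
      = fderiv ℝ (fderiv ℝ f) x w v := by
    intro v w
    rw [fderiv_clm_apply hd (differentiableAt_const v)]
    simp
  show fderiv ℝ (fun y => fderiv ℝ f y (Pi.single j 1)) x (Pi.single i 1)
      = fderiv ℝ (fun y => fderiv ℝ f y (Pi.single i 1)) x (Pi.single j 1)
  rw [key, key, hsym]

private lemma sc_outer (f : Fin n → Fin n → Fin n → ℝ) :
    ∑ a, ∑ b, ∑ c, f a b c = ∑ a, ∑ b, ∑ c, f b a c := Finset.sum_comm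

private lemma sc_inner (f : Fin n → Fin n → Fin n → ℝ) :
    ∑ a, ∑ b, ∑ c, f a b c = ∑ a, ∑ b, ∑ c, f a c b :=
  Finset.sum_congr rfl fun _ _ => Finset.sum_comm

private lemma sum2_ext (f g : Fin n → Fin n → ℝ) (h : ∀ a b, f a b = g a b) :
    ∑ a, ∑ b, f a b = ∑ a, ∑ b, g a b :=
  Finset.sum_congr rfl fun a _ => Finset.sum_congr rfl fun b _ => h a b

private lemma sum3_ext (f g : Fin n → Fin n → Fin n → ℝ) (h : ∀ a b c, f a b c = g a b c) :
    ∑ a, ∑ b, ∑ c, f a b c = ∑ a, ∑ b, ∑ c, g a b c :=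
  Finset.sum_congr rfl fun a _ => Finset.sum_congr rfl fun b _ =>
    Finset.sum_congr rfl fun c _ => h a b c

private lemma sc13 (f : Fin n → Fin n → Fin n → ℝ) :
    ∑ a, ∑ b, ∑ c, f a b c = ∑ a, ∑ b, ∑ c, f c b a :=
  ((sc_inner f).trans (sc_outer fun a b c => f a c b)).trans
    (sc_inner fun a b c => f b c a)

private lemma sc_cyc (f : Fin n → Fin n → Fin n → ℝ) :
    ∑ a, ∑ b, ∑ c, f a b c = ∑ a, ∑ b, ∑ c, f b c a :=
  (sc_inner f).trans (sc_outer fun a b c => f a c b)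

private lemma sc_cyc' (f : Fin n → Fin n → Fin n → ℝ) :
    ∑ a, ∑ b, ∑ c, f a b c = ∑ a, ∑ b, ∑ c, f c a b :=
  (sc_outer f).trans (sc_inner fun a b c => f b a c)

lemma key_algebra (k : Fin n) (U X : Fin n → ℝ)
    (A B : Fin n → Fin n → ℝ)
    (PU PX : Fin n → Fin n → Fin n → ℝ)
    (G : Fin n → Fin n → Fin n → ℝ)
    (DG : Fin n → Fin n → Fin n → Fin n → ℝ)
    (hPU : ∀ i j m, PU i j m = PU j i m) :
    (∑ i, ∑ j, U i * U j *
       (PX j i k + ∑ m, X m * DG m k i j - ∑ m, G m i j * B m k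
         + ∑ m, G k m j * B i m + ∑ m, G k i m * B j m)) =
    (∑ j, X j * (∑ i, (A j i * (A i k + ∑ m, G k m i * U m)
          + U i * (PU j i k + ∑ m, (DG j k m i * U m + G k m i * A j m))))
      - ∑ j, (∑ i, U i * (A i j + ∑ m, G j m i * U m)) * B j k)
    - (∑ i, U i * ((∑ j, (B i j * A j k + X j * PU i j k)
          - ∑ j, (A i j * B j k + U j * PX i j k))
        + ∑ m, G k m i * (∑ j, X j * A j m - ∑ j, U j * B j m)))
    - (∑ i, (A i k + ∑ m, G k m i * U m) * (∑ j, X j * A j i - ∑ j, U j * B j i)) := by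
  have e1 : (∑ a, ∑ b, X a * A a b * A b k) = ∑ a, ∑ b, A a k * X b * A b a := by
    rw [Finset.sum_comm]; exact sum2_ext _ _ fun a b => by ring
  have e2 : (∑ a, ∑ b, ∑ c, X a * A a b * G k c b * U c)
      = ∑ a, ∑ b, ∑ c, G k c a * U c * X b * A b a := by
    rw [sc_outer]; exact sum3_ext _ _ fun a b c => by ring
  have e3 : (∑ a, ∑ b, X a * U b * PU a b k) = ∑ a, ∑ b, U a * X b * PU a b k := by
    rw [Finset.sum_comm]; exact sum2_ext _ _ fun a b => by rw [hPU]; ring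
  have e4 : (∑ a, ∑ b, ∑ c, X a * U b * G k c b * A a c)
      = ∑ a, ∑ b, ∑ c, U a * G k b a * X c * A c b := by
    rw [sc_cyc']; exact sum3_ext _ _ fun a b c => by ring
  have e5 : (∑ a, ∑ b, U b * A b a * B a k) = ∑ a, ∑ b, U a * A a b * B b k := by
    rw [Finset.sum_comm]
  have e6 : (∑ a, ∑ b, U a * B a b * A b k) = ∑ a, ∑ b, A a k * U b * B b a := by
    rw [Finset.sum_comm]; exact sum2_ext _ _ fun a b => by ring
  have f1 : (∑ a, ∑ b, U a * U b * PX a b k) = ∑ a, ∑ b, U a * U b * PX b a k := by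
    rw [Finset.sum_comm]; exact sum2_ext _ _ fun a b => by ring
  have f2 : (∑ a, ∑ b, ∑ c, X a * U b * DG a k c b * U c)
      = ∑ a, ∑ b, ∑ c, U a * U b * X c * DG c k a b := by
    rw [sc13]; exact sum3_ext _ _ fun a b c => by ring
  have f3 : (∑ a, ∑ b, ∑ c, U b * G a c b * U c * B a k)
      = ∑ a, ∑ b, ∑ c, U a * U b * G c a b * B c k := by
    rw [sc13]; exact sum3_ext _ _ fun a b c => by ring
  have f4 : (∑ a, ∑ b, ∑ c, U a * G k b a * U c * B c b)
      = ∑ a, ∑ b, ∑ c, U a * U b * G k c b * B a c := by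
    rw [sc_cyc]; exact sum3_ext _ _ fun a b c => by ring
  have f5 : (∑ a, ∑ b, ∑ c, G k c a * U c * U b * B b a)
      = ∑ a, ∑ b, ∑ c, U a * U b * G k a c * B b c := by
    rw [sc13]; exact sum3_ext _ _ fun a b c => by ring
  simp only [mul_add, add_mul, mul_sub, sub_mul, Finset.mul_sum, Finset.sum_mul,
    Finset.sum_add_distrib, Finset.sum_sub_distrib]
  ring_nf
  ring_nf at e1 e2 e3 e4 e5 e6 f1 f2 f3 f4 f5
  linarith [e1, e2, e3, e4, e5, e6, f1, f2, f3, f4, f5]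


/-- `u^i u^j £_ξ Γ^k_{ij} = (£_ξ F)^k − u^i ((£_ξ u)^k)_{|i} − u^k_{|i} (£_ξ u)^i`,
where `F^k := u^i u^k_{|i}`. -/
theorem lieGamma_contracted {n : ℕ} (hn : 0 < n)
    (Γ : Fin n → Fin n → Fin n → (Fin n → ℝ) → ℝ)
    (u ξ : Fin n → (Fin n → ℝ) → ℝ)
    (hΓ : ∀ k i j, ContDiff ℝ (⊤ : ℕ∞) (Γ k i j))
    (hu : ∀ k, ContDiff ℝ (⊤ : ℕ∞) (u k))
    (hξ : ∀ k, ContDiff ℝ (⊤ : ℕ∞) (ξ k)) :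
    ∀ (x : Fin n → ℝ) (k : Fin n),
      (∑ i, ∑ j, u i x * u j x * lieC ξ Γ k i j x) =
        lieV ξ (fun k y => ∑ i, u i y * covV Γ u k i y) k x
          - (∑ i, u i x * covV Γ (lieV ξ u) k i x)
          - (∑ i, covV Γ u k i x * lieV ξ u i x) := by
  intro x k
  have hud : ∀ m, DifferentiableAt ℝ (u m) x := fun m => ((hu m).differentiable (by simp)) x
  have hxd : ∀ m, DifferentiableAt ℝ (ξ m) x := fun m => ((hξ m).differentiable (by simp)) x
  have hpdu : ∀ j m, ContDiff ℝ (⊤ : ℕ∞) (pd j (u m)) := fun j m => contDiff_pd (hu m) j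
  have hpdx : ∀ j m, ContDiff ℝ (⊤ : ℕ∞) (pd j (ξ m)) := fun j m => contDiff_pd (hξ m) j
  have hC : ∀ a i, ContDiff ℝ (⊤ : ℕ∞) (fun y => pd i (u a) y + ∑ m, Γ a m i y * u m y) :=
    fun a i => (hpdu i a).add (ContDiff.sum fun m _ => (hΓ a m i).mul (hu m))
  -- derivative of F^a
  have hpdF : ∀ (a j : Fin n),
      pd j (fun y => ∑ i, u i y * (pd i (u a) y + ∑ m, Γ a m i y * u m y)) x
      = ∑ i, (pd j (u i) x * (pd i (u a) x + ∑ m, Γ a m i x * u m x)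
          + u i x * (pd j (pd i (u a)) x
            + ∑ m, (pd j (Γ a m i) x * u m x + Γ a m i x * pd j (u m) x))) := by
    intro a j
    rw [pd_sum (f := fun i y => u i y * (pd i (u a) y + ∑ m, Γ a m i y * u m y)) (fun i => (hud i).mul (((hC a i).differentiable (by simp)) x)) j]
    refine Finset.sum_congr rfl fun i _ => ?_
    rw [pd_mul (hud i) (((hC a i).differentiable (by simp)) x) j]
    refine congrArg₂ (· + ·) rfl (congrArg (HMul.hMul (u i x)) ?_)
    rw [pd_add (((hpdu i a).differentiable (by simp)) x)
        (((ContDiff.sum fun m _ => (hΓ a m i).mul (hu m)).differentiable (by simp)) x) j,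
      pd_sum (fun m => (((hΓ a m i).mul (hu m)).differentiable (by simp)) x) j]
    exact congrArg (HAdd.hAdd _) (Finset.sum_congr rfl fun m _ =>
      pd_mul (((hΓ a m i).differentiable (by simp)) x) (hud m) j)
  -- derivative of the Lie derivative of u
  have hpdL : ∀ (a i : Fin n), pd i (lieV ξ u a) x
      = (∑ j, (pd i (ξ j) x * pd j (u a) x + ξ j x * pd i (pd j (u a)) x))
        - ∑ j, (pd i (u j) x * pd j (ξ a) x + u j x * pd i (pd j (ξ a)) x) := by
    intro a i
    have h0 : lieV ξ u a
        = fun y => (∑ j, ξ j y * pd j (u a) y) - ∑ j, u j y * pd j (ξ a) y := rfl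
    rw [h0, pd_sub (((ContDiff.sum fun j _ => (hξ j).mul (hpdu j a)).differentiable (by simp)) x)
        (((ContDiff.sum fun j _ => (hu j).mul (hpdx j a)).differentiable (by simp)) x) i,
      pd_sum (fun j => (((hξ j).mul (hpdu j a)).differentiable (by simp)) x) i,
      pd_sum (fun j => (((hu j).mul (hpdx j a)).differentiable (by simp)) x) i]
    congr 1
    · exact Finset.sum_congr rfl fun j _ => pd_mul (hxd j) (((hpdu j a).differentiable (by simp)) x) i
    · exact Finset.sum_congr rfl fun j _ => pd_mul (hud j) (((hpdx j a).differentiable (by simp)) x) i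
  simp only [lieC, lieV, covV]
  simp only [hpdF, hpdL]
  exact key_algebra k (fun i => u i x) (fun j => ξ j x)
    (fun i m => pd i (u m) x) (fun i m => pd i (ξ m) x)
    (fun i j m => pd i (pd j (u m)) x) (fun i j m => pd i (pd j (ξ m)) x)
    (fun a b c => Γ a b c x) (fun m a b c => pd m (Γ a b c) x)
    (fun i j m => pd_comm (hu m) i j x)
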